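/- Let n ≥ 1 and let J₁, J₂ : ℝ → (m×m real matrices) be n-times continuously differentiable families with J₁(t)·J₁(t) = −I and J₂(t)·J₂(t) = −I for all t. If the k-th derivatives of J₁ and J₂ at 0 agree for every k < n (in particular J₁(0) = J₂(0)), then the difference of n-th derivatives D = J₂⁽ⁿ⁾(0) − J₁⁽ⁿ⁾(0) anticommutes with J₁(0), i.e. D·J₁(0) + J₁(0)·D = 0. -/

import Mathlib

attribute [local instance] Matrix.normedAddCommGroup Matrix.normedSpace

/-!
Differentiating `J t * J t = const` `n` times at `0` with the Leibniz rule gives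
`∑ i ≤ n, (n choose i) J⁽ⁱ⁾(0) J⁽ⁿ⁻ⁱ⁾(0) = 0` for both families. Every term with `0 < i < n`
involves only derivatives of order `< n`, on which `J₁` and `J₂` agree, so subtracting the two
identities leaves `J(0) D + D J(0) = 0`.
-/

open Finset

theorem ContinuousLinearEquiv.iteratedDeriv_comp_left {𝕜 F G : Type*} [NontriviallyNormedField 𝕜]
    [NormedAddCommGroup F] [NormedSpace 𝕜 F] [NormedAddCommGroup G] [NormedSpace 𝕜 G]
    (e : F ≃L[𝕜] G) (f : 𝕜 → F) (n : ℕ) (x : 𝕜) :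
    iteratedDeriv n (e ∘ f) x = e (iteratedDeriv n f x) := by
  simp [iteratedDeriv, e.iteratedFDeriv_comp_left]

section NormedAlgebra

variable {𝕜 𝔸 : Type*} [NontriviallyNormedField 𝕜] [NormedRing 𝔸] [NormedAlgebra 𝕜 𝔸]

theorem sum_choose_mul_iteratedDeriv_mul_iteratedDeriv_eq_zero {J : 𝕜 → 𝔸} {c : 𝔸} {n : ℕ}
    (hn : 1 ≤ n) (hJ : ContDiff 𝕜 n J) (hJJ : ∀ t, J t * J t = c) (x : 𝕜) :
    ∑ i ∈ range (n + 1), n.choose i * iteratedDeriv i J x * iteratedDeriv (n - i) J x = 0 := by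
  rw [← iteratedDeriv_mul hJ.contDiffAt hJ.contDiffAt, show J * J = fun _ ↦ c from funext hJJ,
    iteratedDeriv_const, if_neg (by omega)]

theorem iteratedDeriv_sub_anticomm_of_mul_self_eq_const {J₁ J₂ : 𝕜 → 𝔸} {c₁ c₂ : 𝔸} {n : ℕ}
    (hn : 1 ≤ n) (hJ₁ : ContDiff 𝕜 n J₁) (hJ₂ : ContDiff 𝕜 n J₂)
    (hJJ₁ : ∀ t, J₁ t * J₁ t = c₁) (hJJ₂ : ∀ t, J₂ t * J₂ t = c₂) {x : 𝕜}
    (hagree : ∀ k < n, iteratedDeriv k J₁ x = iteratedDeriv k J₂ x) :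
    (iteratedDeriv n J₂ x - iteratedDeriv n J₁ x) * J₁ x
      + J₁ x * (iteratedDeriv n J₂ x - iteratedDeriv n J₁ x) = 0 := by
  set A := fun i ↦ iteratedDeriv i J₁ x
  set B := fun i ↦ iteratedDeriv i J₂ x
  have hAB : ∀ k < n, A k = B k := hagree
  have hdiff : ∑ i ∈ range (n + 1),
      (n.choose i * B i * B (n - i) - n.choose i * A i * A (n - i)) = 0 := by
    rw [sum_sub_distrib, sum_choose_mul_iteratedDeriv_mul_iteratedDeriv_eq_zero hn hJ₂ hJJ₂,
      sum_choose_mul_iteratedDeriv_mul_iteratedDeriv_eq_zero hn hJ₁ hJJ₁, sub_zero]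
  -- only the two boundary terms `i = 0` and `i = n` involve an `n`-th derivative
  rw [sum_eq_add_of_mem 0 n (by simp) (by simp) (by omega) fun i hi hi' ↦ by
    rw [mem_range] at hi
    rw [hAB i (by omega), hAB (n - i) (by omega), sub_self]] at hdiff
  have h0 : A 0 = J₁ x := by simp [A]
  have hB0 : B 0 = J₁ x := (hAB 0 hn).symm.trans h0
  simp only [Nat.choose_zero_right, Nat.choose_self, Nat.cast_one, one_mul, Nat.sub_zero,
    Nat.sub_self, h0, hB0] at hdiff
  rw [sub_mul, mul_sub, ← hdiff]
  abel

end NormedAlgebra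

/-- Let `J₁, J₂ : ℝ → Matrix (Fin m) (Fin m) ℝ` be `n`-times continuously differentiable
families of linear complex structures (`Jᵢ t * Jᵢ t = -1`). If their `k`-th derivatives
at `0` agree for every `k < n`, then `D = J₂⁽ⁿ⁾ 0 - J₁⁽ⁿ⁾ 0` anticommutes with `J₁ 0`. -/
theorem stmt4 (m n : ℕ) (hn : 1 ≤ n) (J₁ J₂ : ℝ → Matrix (Fin m) (Fin m) ℝ)
    (hJ₁smooth : ContDiff ℝ n J₁) (hJ₂smooth : ContDiff ℝ n J₂)
    (hJ₁ : ∀ t, J₁ t * J₁ t = -1) (hJ₂ : ∀ t, J₂ t * J₂ t = -1)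
    (hagree : ∀ k < n, iteratedDeriv k J₁ 0 = iteratedDeriv k J₂ 0) :
    (iteratedDeriv n J₂ 0 - iteratedDeriv n J₁ 0) * J₁ 0
      + J₁ 0 * (iteratedDeriv n J₂ 0 - iteratedDeriv n J₁ 0) = 0 := by
  -- The sup norm on matrices is not submultiplicative; transport to the operator algebra.
  let φ := Matrix.toEuclideanCLM (n := Fin m) (𝕜 := ℝ)
  let e := φ.toAlgEquiv.toLinearEquiv.toContinuousLinearEquiv
  have he_mul : ∀ A B, e (A * B) = e A * e B := map_mul φ
  have he_sq : ∀ J : ℝ → Matrix (Fin m) (Fin m) ℝ, (∀ t, J t * J t = -1) →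
      ∀ t, (e ∘ J) t * (e ∘ J) t = e (-1) := fun J hJ t ↦ by
    rw [Function.comp_apply, ← he_mul, hJ]
  have key := iteratedDeriv_sub_anticomm_of_mul_self_eq_const hn
    (e.contDiff.comp hJ₁smooth) (e.contDiff.comp hJ₂smooth) (he_sq J₁ hJ₁) (he_sq J₂ hJ₂)
    fun k hk ↦ by rw [e.iteratedDeriv_comp_left, e.iteratedDeriv_comp_left, hagree k hk]
  simp only [e.iteratedDeriv_comp_left, Function.comp_apply] at key
  apply e.injective
  rwa [map_add, map_zero, he_mul, he_mul, map_sub]
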